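/- arXiv:2405.15531 — 4 statements merged into one kernel-verified Lean document; each statement's English description precedes it below -/
import Mathlib

section
/- Let x1,...,xl1 and y1,...,yl2 be real numbers, a1,...,al1, b1,...,bl2, β positive reals, and define T(z) = Σ_{i=1}^{l1} a_i exp(-β|x_i - z|) - Σ_{i=1}^{l2} b_i exp(-β|y_i - z|). Then for every z0 ∈ ℝ, T(z0) ≥ min{0, T(x_1),..., T(x_{l1}), T(y_1),..., T(y_{l2})}. -/
lemma core_aux (A B β u s v : ℝ) (hβ : 0 < β) (h1 : u ≤ s) (h2 : s ≤ v) :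
    min 0 (min (A * Real.exp (β*u) + B * Real.exp (-(β*u)))
               (A * Real.exp (β*v) + B * Real.exp (-(β*v))))
      ≤ A * Real.exp (β*s) + B * Real.exp (-(β*s)) := by
  set p := Real.exp (β*u) with hp
  set t := Real.exp (β*s) with ht
  set q := Real.exp (β*v) with hq
  have hp0 : 0 < p := Real.exp_pos _
  have ht0 : 0 < t := Real.exp_pos _
  have hq0 : 0 < q := Real.exp_pos _
  have hpt : p ≤ t := Real.exp_le_exp.2 (by nlinarith)
  have htq : t ≤ q := Real.exp_le_exp.2 (by nlinarith)
  have e1 : Real.exp (-(β*u)) = p⁻¹ := by rw [hp, ← Real.exp_neg]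
  have e2 : Real.exp (-(β*s)) = t⁻¹ := by rw [ht, ← Real.exp_neg]
  have e3 : Real.exp (-(β*v)) = q⁻¹ := by rw [hq, ← Real.exp_neg]
  rw [e1, e2, e3]
  rcases le_or_gt 0 B with hB | hB
  · rcases le_or_gt 0 A with hA | hA
    · have : (0:ℝ) ≤ A * t + B * t⁻¹ := by positivity
      exact le_trans (min_le_left _ _) this
    · refine le_trans (min_le_right _ _) (le_trans (min_le_right _ _) ?_)
      have h3 : A * q ≤ A * t := by nlinarith
      have h4 : B * q⁻¹ ≤ B * t⁻¹ := by
        apply mul_le_mul_of_nonneg_left _ hB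
        exact inv_anti₀ ht0 htq
      linarith
  · rcases le_or_gt 0 (A - B / (t * p)) with hC | hC
    · refine le_trans (min_le_right _ _) (le_trans (min_le_left _ _) ?_)
      have key : A * t + B * t⁻¹ - (A * p + B * p⁻¹) = (t - p) * (A - B / (t * p)) := by
        field_simp
        ring
      nlinarith
    · refine le_trans (min_le_right _ _) (le_trans (min_le_right _ _) ?_)
      have hC' : A - B / (t * q) < 0 := by
        have : B / (t * q) ≥ B / (t * p) := by
          have h1' : (0:ℝ) < t * p := by positivity
          have h2' : t * p ≤ t * q := by nlinarith
          have h3' : (0:ℝ) < t * q := by positivity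
          rw [ge_iff_le, div_le_div_iff₀ h1' h3']
          nlinarith
        linarith
      have key : A * q + B * q⁻¹ - (A * t + B * t⁻¹) = (q - t) * (A - B / (t * q)) := by
        field_simp
        ring
      nlinarith

theorem stmt1 {l1 l2 : ℕ} (x : Fin l1 → ℝ) (y : Fin l2 → ℝ)
    (a : Fin l1 → ℝ) (b : Fin l2 → ℝ) (β : ℝ)
    (ha : ∀ i, 0 < a i) (hb : ∀ i, 0 < b i) (hβ : 0 < β)
    (T : ℝ → ℝ)
    (hT : ∀ z, T z = ∑ i, a i * Real.exp (-β * |x i - z|)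
      - ∑ i, b i * Real.exp (-β * |y i - z|))
    (S : Finset ℝ) (hS : S = Finset.univ.image x ∪ Finset.univ.image y)
    (V : Finset ℝ) (hV : V = insert 0 (S.image T)) (hVne : V.Nonempty) :
    ∀ z0 : ℝ, V.min' hVne ≤ T z0 := by
  intro z0
  have h0V : (0:ℝ) ∈ V := by rw [hV]; exact Finset.mem_insert_self _ _
  have hmin0 : V.min' hVne ≤ 0 := Finset.min'_le _ _ h0V
  have hminT : ∀ c ∈ S, V.min' hVne ≤ T c := by
    intro c hc
    exact Finset.min'_le _ _ (by rw [hV]; exact Finset.mem_insert_of_mem (Finset.mem_image_of_mem T hc))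
  have hxS : ∀ i, x i ∈ S := by
    intro i; rw [hS]
    exact Finset.mem_union_left _ (Finset.mem_image_of_mem x (Finset.mem_univ i))
  have hyS : ∀ i, y i ∈ S := by
    intro i; rw [hS]
    exact Finset.mem_union_right _ (Finset.mem_image_of_mem y (Finset.mem_univ i))
  set A : ℝ := (∑ i, if z0 < x i then a i * Real.exp (-(β * x i)) else 0)
             - (∑ i, if z0 < y i then b i * Real.exp (-(β * y i)) else 0) with hA
  set B : ℝ := (∑ i, if z0 < x i then (0:ℝ) else a i * Real.exp (β * x i))
             - (∑ i, if z0 < y i then (0:ℝ) else b i * Real.exp (β * y i)) with hB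
  have rep : ∀ z : ℝ, (∀ c ∈ S, (z0 < c → z ≤ c) ∧ (¬ z0 < c → c ≤ z)) →
      T z = A * Real.exp (β * z) + B * Real.exp (-(β * z)) := by
    intro z hz
    have hxterm : ∀ i : Fin l1, a i * Real.exp (-β * |x i - z|) =
        (if z0 < x i then a i * Real.exp (-(β * x i)) else 0) * Real.exp (β * z)
        + (if z0 < x i then (0:ℝ) else a i * Real.exp (β * x i)) * Real.exp (-(β * z)) := by
      intro i
      obtain ⟨h1, h2⟩ := hz (x i) (hxS i)
      by_cases hc : z0 < x i
      · have hle : z ≤ x i := h1 hc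
        rw [if_pos hc, if_pos hc, abs_of_nonneg (by linarith)]
        rw [show -β * (x i - z) = (-(β * x i)) + β * z by ring, Real.exp_add]
        ring
      · have hle : x i ≤ z := h2 hc
        rw [if_neg hc, if_neg hc, abs_of_nonpos (by linarith)]
        rw [show -β * -(x i - z) = β * x i + (-(β * z)) by ring, Real.exp_add]
        ring
    have hyterm : ∀ i : Fin l2, b i * Real.exp (-β * |y i - z|) =
        (if z0 < y i then b i * Real.exp (-(β * y i)) else 0) * Real.exp (β * z)
        + (if z0 < y i then (0:ℝ) else b i * Real.exp (β * y i)) * Real.exp (-(β * z)) := by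
      intro i
      obtain ⟨h1, h2⟩ := hz (y i) (hyS i)
      by_cases hc : z0 < y i
      · have hle : z ≤ y i := h1 hc
        rw [if_pos hc, if_pos hc, abs_of_nonneg (by linarith)]
        rw [show -β * (y i - z) = (-(β * y i)) + β * z by ring, Real.exp_add]
        ring
      · have hle : y i ≤ z := h2 hc
        rw [if_neg hc, if_neg hc, abs_of_nonpos (by linarith)]
        rw [show -β * -(y i - z) = β * y i + (-(β * z)) by ring, Real.exp_add]
        ring
    rw [hT z, Finset.sum_congr rfl (fun i _ => hxterm i),
        Finset.sum_congr rfl (fun i _ => hyterm i),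
        Finset.sum_add_distrib, Finset.sum_add_distrib,
        ← Finset.sum_mul, ← Finset.sum_mul, ← Finset.sum_mul, ← Finset.sum_mul,
        hA, hB]
    ring
  by_cases hSne : S.Nonempty
  · set L := S.filter (fun c => ¬ z0 < c) with hL
    set R := S.filter (fun c => z0 < c) with hR
    have hLS : L ⊆ S := Finset.filter_subset _ _
    have hRS : R ⊆ S := Finset.filter_subset _ _
    by_cases hLne : L.Nonempty
    · by_cases hRne : R.Nonempty
      · -- both sides nonempty
        set u := L.max' hLne with hu
        set v := R.min' hRne with hv
        have huL : u ∈ L := Finset.max'_mem _ _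
        have hvR : v ∈ R := Finset.min'_mem _ _
        have huz : u ≤ z0 := le_of_not_gt (Finset.mem_filter.1 huL).2
        have hzv : z0 ≤ v := le_of_lt (Finset.mem_filter.1 hvR).2
        have rz0 : T z0 = A * Real.exp (β * z0) + B * Real.exp (-(β * z0)) := by
          apply rep; intro c _; exact ⟨fun h => h.le, fun h => le_of_not_gt h⟩
        have ru : T u = A * Real.exp (β * u) + B * Real.exp (-(β * u)) := by
          apply rep; intro c hc
          constructor
          · intro h; linarith
          · intro h; exact Finset.le_max' _ _ (Finset.mem_filter.2 ⟨hc, h⟩)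
        have rv : T v = A * Real.exp (β * v) + B * Real.exp (-(β * v)) := by
          apply rep; intro c hc
          constructor
          · intro h; exact Finset.min'_le _ _ (Finset.mem_filter.2 ⟨hc, h⟩)
          · intro h; linarith [le_of_not_gt h]
        have hcore := core_aux A B β u z0 v hβ huz hzv
        rw [← ru, ← rv, ← rz0] at hcore
        have h1 : V.min' hVne ≤ min 0 (min (T u) (T v)) := by
          simp only [le_min_iff]
          exact ⟨hmin0, hminT u (hLS huL), hminT v (hRS hvR)⟩
        linarith
      · -- R empty: all centers ≤ z0, A = 0
        have hRe : ∀ c ∈ S, ¬ z0 < c := by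
          intro c hc h
          exact hRne ⟨c, Finset.mem_filter.2 ⟨hc, h⟩⟩
        have hA0 : A = 0 := by
          rw [hA]
          rw [Finset.sum_eq_zero (fun i _ => if_neg (hRe (x i) (hxS i))),
              Finset.sum_eq_zero (fun i _ => if_neg (hRe (y i) (hyS i))), sub_zero]
        set u := L.max' hLne with hu
        have huL : u ∈ L := Finset.max'_mem _ _
        have huz : u ≤ z0 := le_of_not_gt (Finset.mem_filter.1 huL).2
        have rz0 : T z0 = A * Real.exp (β * z0) + B * Real.exp (-(β * z0)) := by
          apply rep; intro c _; exact ⟨fun h => h.le, fun h => le_of_not_gt h⟩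
        have ru : T u = A * Real.exp (β * u) + B * Real.exp (-(β * u)) := by
          apply rep; intro c hc
          constructor
          · intro h; exact absurd h (hRe c hc)
          · intro h; exact Finset.le_max' _ _ (Finset.mem_filter.2 ⟨hc, h⟩)
        rw [hA0, zero_mul, zero_add] at rz0 ru
        have hmono : Real.exp (-(β * z0)) ≤ Real.exp (-(β * u)) :=
          Real.exp_le_exp.2 (by nlinarith)
        rcases le_or_gt 0 B with hBpos | hBneg
        · have : (0:ℝ) ≤ T z0 := by rw [rz0]; positivity
          linarith
        · have : T u ≤ T z0 := by
            rw [rz0, ru]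
            exact mul_le_mul_of_nonpos_left hmono hBneg.le
          linarith [hminT u (hLS huL)]
    · -- L empty: all centers > z0, B = 0
      have hLe : ∀ c ∈ S, z0 < c := by
        intro c hc
        by_contra h
        exact hLne ⟨c, Finset.mem_filter.2 ⟨hc, h⟩⟩
      have hRne : R.Nonempty := by
        obtain ⟨c, hc⟩ := hSne
        exact ⟨c, Finset.mem_filter.2 ⟨hc, hLe c hc⟩⟩
      have hB0 : B = 0 := by
        rw [hB]
        rw [Finset.sum_eq_zero (fun i _ => if_pos (hLe (x i) (hxS i))),
            Finset.sum_eq_zero (fun i _ => if_pos (hLe (y i) (hyS i))), sub_zero]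
      set v := R.min' hRne with hv
      have hvR : v ∈ R := Finset.min'_mem _ _
      have hzv : z0 ≤ v := le_of_lt (Finset.mem_filter.1 hvR).2
      have rz0 : T z0 = A * Real.exp (β * z0) + B * Real.exp (-(β * z0)) := by
        apply rep; intro c _; exact ⟨fun h => h.le, fun h => le_of_not_gt h⟩
      have rv : T v = A * Real.exp (β * v) + B * Real.exp (-(β * v)) := by
        apply rep; intro c hc
        constructor
        · intro h; exact Finset.min'_le _ _ (Finset.mem_filter.2 ⟨hc, h⟩)
        · intro h; exact absurd (hLe c hc) h
      rw [hB0, zero_mul, add_zero] at rz0 rv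
      have hmono : Real.exp (β * z0) ≤ Real.exp (β * v) :=
        Real.exp_le_exp.2 (by nlinarith)
      rcases le_or_gt 0 A with hApos | hAneg
      · have : (0:ℝ) ≤ T z0 := by rw [rz0]; positivity
        linarith
      · have : T v ≤ T z0 := by
          rw [rz0, rv]
          exact mul_le_mul_of_nonpos_left hmono hAneg.le
        linarith [hminT v (hRS hvR)]
  · -- S empty
    have hTz0 : T z0 = A * Real.exp (β * z0) + B * Real.exp (-(β * z0)) := by
      apply rep; intro c hc; exact absurd ⟨c, hc⟩ hSne
    have hA0 : A = 0 := by
      rw [hA]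
      have hx0 : ∀ i : Fin l1, False := fun i => hSne ⟨x i, hxS i⟩
      have hy0 : ∀ i : Fin l2, False := fun i => hSne ⟨y i, hyS i⟩
      haveI : IsEmpty (Fin l1) := ⟨hx0⟩
      haveI : IsEmpty (Fin l2) := ⟨hy0⟩
      simp
    have hB0 : B = 0 := by
      rw [hB]
      have hx0 : ∀ i : Fin l1, False := fun i => hSne ⟨x i, hxS i⟩
      have hy0 : ∀ i : Fin l2, False := fun i => hSne ⟨y i, hyS i⟩
      haveI : IsEmpty (Fin l1) := ⟨hx0⟩
      haveI : IsEmpty (Fin l2) := ⟨hy0⟩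
      simp
    rw [hTz0, hA0, hB0]
    simpa using hmin0
end

section
/- Let x1,...,xl1 and y1,...,yl2 be real numbers, a1,...,al1, b1,...,bl2, β positive reals, and define T(z) = Σ_{i=1}^{l1} a_i exp(-β|x_i - z|) - Σ_{i=1}^{l2} b_i exp(-β|y_i - z|). Then for every z0 ∈ ℝ, T(z0) ≤ max{0, T(x_1),..., T(x_{l1}), T(y_1),..., T(y_{l2})}. -/
private lemma stmt2_aux (A B u s : ℝ) (hu : 0 < u) (hs : 0 < s) (hus : u ≤ s)
    (hc : A * (s * u) ≤ B) : A * s + B * s⁻¹ ≤ A * u + B * u⁻¹ := by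
  have hs' : s ≠ 0 := ne_of_gt hs
  have hu' : u ≠ 0 := ne_of_gt hu
  have key : (A * u + B * u⁻¹) - (A * s + B * s⁻¹)
      = ((s - u) * (B - A * (s * u))) * (s⁻¹ * u⁻¹) := by
    field_simp
    ring
  have hnn : 0 ≤ ((s - u) * (B - A * (s * u))) * (s⁻¹ * u⁻¹) :=
    mul_nonneg (mul_nonneg (sub_nonneg.mpr hus) (sub_nonneg.mpr hc))
      (le_of_lt (mul_pos (inv_pos.mpr hs) (inv_pos.mpr hu)))
  linarith

private lemma stmt2_aux2 (A B s v : ℝ) (hs : 0 < s) (hv : 0 < v) (hsv : s ≤ v)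
    (hc : B ≤ A * (s * v)) : A * s + B * s⁻¹ ≤ A * v + B * v⁻¹ := by
  have hs' : s ≠ 0 := ne_of_gt hs
  have hv' : v ≠ 0 := ne_of_gt hv
  have key : (A * v + B * v⁻¹) - (A * s + B * s⁻¹)
      = ((v - s) * (A * (s * v) - B)) * (s⁻¹ * v⁻¹) := by
    field_simp
    ring
  have hnn : 0 ≤ ((v - s) * (A * (s * v) - B)) * (s⁻¹ * v⁻¹) :=
    mul_nonneg (mul_nonneg (sub_nonneg.mpr hsv) (sub_nonneg.mpr hc))
      (le_of_lt (mul_pos (inv_pos.mpr hs) (inv_pos.mpr hv)))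
  linarith

theorem stmt2 {l1 l2 : ℕ} (x : Fin l1 → ℝ) (y : Fin l2 → ℝ)
    (a : Fin l1 → ℝ) (b : Fin l2 → ℝ) (β : ℝ)
    (ha : ∀ i, 0 < a i) (hb : ∀ i, 0 < b i) (hβ : 0 < β)
    (T : ℝ → ℝ)
    (hT : ∀ z, T z = ∑ i, a i * Real.exp (-β * |x i - z|)
      - ∑ i, b i * Real.exp (-β * |y i - z|))
    (S : Finset ℝ) (hS : S = Finset.univ.image x ∪ Finset.univ.image y)
    (V : Finset ℝ) (hV : V = insert 0 (S.image T)) (hVne : V.Nonempty) :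
    ∀ z0 : ℝ, T z0 ≤ V.max' hVne := by
  intro z0
  classical
  set A : ℝ := (∑ i, if z0 < x i then a i * Real.exp (-β * x i) else 0)
      - (∑ i, if z0 < y i then b i * Real.exp (-β * y i) else 0) with hA
  set B : ℝ := (∑ i, if x i ≤ z0 then a i * Real.exp (β * x i) else 0)
      - (∑ i, if y i ≤ z0 then b i * Real.exp (β * y i) else 0) with hB
  -- key representation lemma
  have hkey : ∀ w : ℝ, (∀ i, x i ≤ z0 → x i ≤ w) → (∀ i, z0 < x i → w ≤ x i) →
      (∀ i, y i ≤ z0 → y i ≤ w) → (∀ i, z0 < y i → w ≤ y i) →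
      T w = A * Real.exp (β * w) + B * Real.exp (-(β * w)) := by
    intro w hx1 hx2 hy1 hy2
    have hone : ∀ (c d : ℝ), (c ≤ z0 → c ≤ w) → (z0 < c → w ≤ c) →
        d * Real.exp (-β * |c - w|)
          = (if z0 < c then d * Real.exp (-β * c) else 0) * Real.exp (β * w)
            + (if c ≤ z0 then d * Real.exp (β * c) else 0) * Real.exp (-(β * w)) := by
      intro c d h1 h2
      by_cases h : c ≤ z0
      · have hcw : c ≤ w := h1 h
        rw [if_neg (not_lt.mpr h), if_pos h,
          show -β * |c - w| = β * c + -(β * w) by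
            rw [abs_of_nonpos (by linarith : c - w ≤ 0)]; ring,
          Real.exp_add]
        ring
      · push_neg at h
        have hwc : w ≤ c := h2 h
        rw [if_pos h, if_neg (not_le.mpr h),
          show -β * |c - w| = -β * c + β * w by
            rw [abs_of_nonneg (by linarith : 0 ≤ c - w)]; ring,
          Real.exp_add]
        ring
    have e1 : ∑ i, a i * Real.exp (-β * |x i - w|)
        = (∑ i, if z0 < x i then a i * Real.exp (-β * x i) else 0) * Real.exp (β * w)
          + (∑ i, if x i ≤ z0 then a i * Real.exp (β * x i) else 0) * Real.exp (-(β * w)) := by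
      rw [Finset.sum_mul, Finset.sum_mul, ← Finset.sum_add_distrib]
      exact Finset.sum_congr rfl fun i _ => hone (x i) (a i) (hx1 i) (hx2 i)
    have e2 : ∑ i, b i * Real.exp (-β * |y i - w|)
        = (∑ i, if z0 < y i then b i * Real.exp (-β * y i) else 0) * Real.exp (β * w)
          + (∑ i, if y i ≤ z0 then b i * Real.exp (β * y i) else 0) * Real.exp (-(β * w)) := by
      rw [Finset.sum_mul, Finset.sum_mul, ← Finset.sum_add_distrib]
      exact Finset.sum_congr rfl fun i _ => hone (y i) (b i) (hy1 i) (hy2 i)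
    rw [hT w, e1, e2, hA, hB]; ring
  have hxS : ∀ i, x i ∈ S := fun i => by
    rw [hS]; exact Finset.mem_union_left _ (Finset.mem_image_of_mem x (Finset.mem_univ i))
  have hyS : ∀ i, y i ∈ S := fun i => by
    rw [hS]; exact Finset.mem_union_right _ (Finset.mem_image_of_mem y (Finset.mem_univ i))
  have h0le : (0:ℝ) ≤ V.max' hVne :=
    Finset.le_max' _ _ (by rw [hV]; exact Finset.mem_insert_self _ _)
  have hmemT : ∀ w ∈ S, T w ≤ V.max' hVne := fun w hw =>
    Finset.le_max' _ _ (by rw [hV]; exact Finset.mem_insert_of_mem (Finset.mem_image_of_mem T hw))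
  have hTz0 : T z0 = A * Real.exp (β * z0) + B * Real.exp (-(β * z0)) :=
    hkey z0 (fun _ h => h) (fun _ h => h.le) (fun _ h => h) (fun _ h => h.le)
  set L : Finset ℝ := S.filter (fun c => c ≤ z0) with hL
  set R : Finset ℝ := S.filter (fun c => z0 < c) with hR
  have hmemL : ∀ c, c ∈ S → c ≤ z0 → c ∈ L := fun c h1 h2 => Finset.mem_filter.mpr ⟨h1, h2⟩
  have hmemR : ∀ c, c ∈ S → z0 < c → c ∈ R := fun c h1 h2 => Finset.mem_filter.mpr ⟨h1, h2⟩
  have hBL : 0 < B → L.Nonempty := by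
    intro hBpos
    by_contra hne
    rw [Finset.not_nonempty_iff_eq_empty] at hne
    have hx0 : ∀ i, ¬ (x i ≤ z0) := by
      intro i hle
      have : x i ∈ L := Finset.mem_filter.mpr ⟨hxS i, hle⟩
      rw [hne] at this
      exact absurd this (Finset.notMem_empty _)
    have h1 : (∑ i, if x i ≤ z0 then a i * Real.exp (β * x i) else 0) = 0 :=
      Finset.sum_eq_zero fun i _ => if_neg (hx0 i)
    have h2 : (0:ℝ) ≤ ∑ i, if y i ≤ z0 then b i * Real.exp (β * y i) else 0 :=
      Finset.sum_nonneg fun i _ => by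
        split_ifs
        · exact le_of_lt (mul_pos (hb i) (Real.exp_pos _))
        · exact le_rfl
    rw [hB, h1] at hBpos; linarith
  have hAR : 0 < A → R.Nonempty := by
    intro hApos
    by_contra hne
    rw [Finset.not_nonempty_iff_eq_empty] at hne
    have hx0 : ∀ i, ¬ (z0 < x i) := by
      intro i hle
      have : x i ∈ R := Finset.mem_filter.mpr ⟨hxS i, hle⟩
      rw [hne] at this
      exact absurd this (Finset.notMem_empty _)
    have h1 : (∑ i, if z0 < x i then a i * Real.exp (-β * x i) else 0) = 0 :=
      Finset.sum_eq_zero fun i _ => if_neg (hx0 i)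
    have h2 : (0:ℝ) ≤ ∑ i, if z0 < y i then b i * Real.exp (-β * y i) else 0 :=
      Finset.sum_nonneg fun i _ => by
        split_ifs
        · exact le_of_lt (mul_pos (hb i) (Real.exp_pos _))
        · exact le_rfl
    rw [hA, h1] at hApos; linarith
  -- facts about p := L.max' and q := R.min'
  rcases le_or_gt A 0 with hA0 | hA0
  · rcases le_or_gt B 0 with hB0 | hB0
    · -- both nonpositive : T z0 ≤ 0
      have : T z0 ≤ 0 := by
        rw [hTz0]
        have := Real.exp_pos (β * z0)
        have := Real.exp_pos (-(β * z0))
        nlinarith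
      linarith
    · -- A ≤ 0 < B : compare with p = L.max'
      obtain hLne := hBL hB0
      set p := L.max' hLne with hp
      have hpL : p ∈ L := L.max'_mem hLne
      have hpS : p ∈ S := (Finset.mem_filter.mp hpL).1
      have hpz : p ≤ z0 := (Finset.mem_filter.mp hpL).2
      have hTp : T p = A * Real.exp (β * p) + B * Real.exp (-(β * p)) :=
        hkey p (fun i h => Finset.le_max' L _ (hmemL _ (hxS i) h))
          (fun i h => le_trans hpz h.le)
          (fun i h => Finset.le_max' L _ (hmemL _ (hyS i) h))
          (fun i h => le_trans hpz h.le)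
      have key : T z0 ≤ T p := by
        rw [hTz0, hTp]
        have e1 : Real.exp (β * p) ≤ Real.exp (β * z0) :=
          Real.exp_le_exp.mpr (mul_le_mul_of_nonneg_left hpz hβ.le)
        have e2 : Real.exp (-(β * z0)) ≤ Real.exp (-(β * p)) :=
          Real.exp_le_exp.mpr (by nlinarith)
        nlinarith
      exact le_trans key (hmemT p hpS)
  · rcases le_or_gt B 0 with hB0 | hB0
    · -- B ≤ 0 < A : compare with q = R.min'
      obtain hRne := hAR hA0
      set q := R.min' hRne with hq
      have hqR : q ∈ R := R.min'_mem hRne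
      have hqS : q ∈ S := (Finset.mem_filter.mp hqR).1
      have hqz : z0 ≤ q := le_of_lt (Finset.mem_filter.mp hqR).2
      have hTq : T q = A * Real.exp (β * q) + B * Real.exp (-(β * q)) :=
        hkey q (fun i h => le_trans h hqz)
          (fun i h => Finset.min'_le R _ (hmemR _ (hxS i) h))
          (fun i h => le_trans h hqz)
          (fun i h => Finset.min'_le R _ (hmemR _ (hyS i) h))
      have key : T z0 ≤ T q := by
        rw [hTz0, hTq]
        have e1 : Real.exp (β * z0) ≤ Real.exp (β * q) :=
          Real.exp_le_exp.mpr (mul_le_mul_of_nonneg_left hqz hβ.le)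
        have e2 : Real.exp (-(β * q)) ≤ Real.exp (-(β * z0)) :=
          Real.exp_le_exp.mpr (by nlinarith)
        nlinarith
      exact le_trans key (hmemT q hqS)
    · -- 0 < A, 0 < B : convexity, compare with both neighbors
      obtain hLne := hBL hB0
      obtain hRne := hAR hA0
      set p := L.max' hLne with hp
      set q := R.min' hRne with hq
      have hpL : p ∈ L := L.max'_mem hLne
      have hpS : p ∈ S := (Finset.mem_filter.mp hpL).1
      have hpz : p ≤ z0 := (Finset.mem_filter.mp hpL).2
      have hqR : q ∈ R := R.min'_mem hRne
      have hqS : q ∈ S := (Finset.mem_filter.mp hqR).1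
      have hqz : z0 ≤ q := le_of_lt (Finset.mem_filter.mp hqR).2
      have hTp : T p = A * Real.exp (β * p) + B * Real.exp (-(β * p)) :=
        hkey p (fun i h => Finset.le_max' L _ (hmemL _ (hxS i) h))
          (fun i h => le_trans hpz h.le)
          (fun i h => Finset.le_max' L _ (hmemL _ (hyS i) h))
          (fun i h => le_trans hpz h.le)
      have hTq : T q = A * Real.exp (β * q) + B * Real.exp (-(β * q)) :=
        hkey q (fun i h => le_trans h hqz)
          (fun i h => Finset.min'_le R _ (hmemR _ (hxS i) h))
          (fun i h => le_trans h hqz)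
          (fun i h => Finset.min'_le R _ (hmemR _ (hyS i) h))
      set u := Real.exp (β * p) with hu
      set s := Real.exp (β * z0) with hs
      set v := Real.exp (β * q) with hv
      have hu0 : 0 < u := Real.exp_pos _
      have hs0 : 0 < s := Real.exp_pos _
      have hv0 : 0 < v := Real.exp_pos _
      have hus : u ≤ s := Real.exp_le_exp.mpr (mul_le_mul_of_nonneg_left hpz hβ.le)
      have hsv : s ≤ v := Real.exp_le_exp.mpr (mul_le_mul_of_nonneg_left hqz hβ.le)
      have hsi : Real.exp (-(β * z0)) = s⁻¹ := Real.exp_neg _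
      have hui : Real.exp (-(β * p)) = u⁻¹ := Real.exp_neg _
      have hvi : Real.exp (-(β * q)) = v⁻¹ := Real.exp_neg _
      rcases le_or_gt (A * (s * u)) B with hcase | hcase
      · have key : T z0 ≤ T p := by
          rw [hTz0, hTp, hsi, hui]
          exact stmt2_aux A B u s hu0 hs0 hus hcase
        exact le_trans key (hmemT p hpS)
      · have key : T z0 ≤ T q := by
          rw [hTz0, hTq, hsi, hvi]
          have hcase' : B ≤ A * (s * v) := by nlinarith
          exact stmt2_aux2 A B s v hs0 hv0 hsv hcase'
        exact le_trans key (hmemT q hqS)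
end

section
/- Let x1,...,xl1, y1,...,yl2 ∈ ℝ^d, a1,...,al1, b1,...,bl2, β positive reals, and let U ⊆ {1,...,d} be a nonempty set of coordinates. For a vector z with coordinates (z(j))_{j∈U}, define T(z) = Σ_{i=1}^{l1} a_i exp(-β Σ_{j∈U} |x_i(j) - z(j)|) - Σ_{i=1}^{l2} b_i exp(-β Σ_{j∈U} |y_i(j) - z(j)|). Let X be the set of values of T over all z whose coordinate z(j), for each j ∈ U, belongs to {x_1(j),...,x_{l1}(j), y_1(j),...,y_{l2}(j)}. Then for every real assignment z* of the coordinates in U, min{0, min X} ≤ T(z*) ≤ max{0, max X}. -/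
lemma aux1 (A B u p v : ℝ) (hu : 0 < u) (h1 : u ≤ p) (h2 : p ≤ v) :
    A * p + B * p⁻¹ ≤ max 0 (max (A * u + B * u⁻¹) (A * v + B * v⁻¹)) := by
  have hp : 0 < p := lt_of_lt_of_le hu h1
  have hv : 0 < v := lt_of_lt_of_le hp h2
  by_cases hB : A * p * u ≤ B
  · have key : A * p + B * p⁻¹ - (A * u + B * u⁻¹)
        = (p - u) * (A * p * u - B) * (p * u)⁻¹ := by
      field_simp
      ring
    have h3 : (p - u) * (A * p * u - B) * (p * u)⁻¹ ≤ 0 := by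
      apply mul_nonpos_of_nonpos_of_nonneg
      · exact mul_nonpos_of_nonneg_of_nonpos (by linarith) (by linarith)
      · positivity
    have : A * p + B * p⁻¹ ≤ A * u + B * u⁻¹ := by linarith
    exact this.trans ((le_max_left _ _).trans (le_max_right _ _))
  · push_neg at hB
    rcases le_or_gt 0 A with hA | hA
    · have hBv : B ≤ A * p * v := by nlinarith [mul_nonneg (mul_nonneg hA hp.le) (sub_nonneg.2 (h1.trans h2))]
      have key : A * p + B * p⁻¹ - (A * v + B * v⁻¹)
          = (p - v) * (A * p * v - B) * (p * v)⁻¹ := by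
        field_simp
        ring
      have h3 : (p - v) * (A * p * v - B) * (p * v)⁻¹ ≤ 0 := by
        apply mul_nonpos_of_nonpos_of_nonneg
        · exact mul_nonpos_of_nonpos_of_nonneg (by linarith) (by linarith)
        · positivity
      have : A * p + B * p⁻¹ ≤ A * v + B * v⁻¹ := by linarith
      exact this.trans ((le_max_right _ _).trans (le_max_right _ _))
    · have hBneg : B < 0 := hB.trans (mul_neg_of_neg_of_pos (mul_neg_of_neg_of_pos hA hp) hu)
      have : A * p + B * p⁻¹ ≤ 0 := by
        have h4 : A * p < 0 := mul_neg_of_neg_of_pos hA hp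
        have h5 : B * p⁻¹ < 0 := mul_neg_of_neg_of_pos hBneg (by positivity)
        linarith
      exact this.trans (le_max_left _ _)

lemma aux2 (B u p : ℝ) (hu : 0 < u) (h : u ≤ p) :
    B * p⁻¹ ≤ max 0 (B * u⁻¹) := by
  have hp : 0 < p := lt_of_lt_of_le hu h
  rcases le_or_gt B 0 with hB | hB
  · exact (mul_nonpos_of_nonpos_of_nonneg hB (by positivity)).trans (le_max_left _ _)
  · have : B * p⁻¹ ≤ B * u⁻¹ :=
      mul_le_mul_of_nonneg_left (inv_anti₀ hu h) hB.le
    exact this.trans (le_max_right _ _)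

lemma aux3 (A p v : ℝ) (hp : 0 < p) (h : p ≤ v) :
    A * p ≤ max 0 (A * v) := by
  rcases le_or_gt A 0 with hA | hA
  · exact (mul_nonpos_of_nonpos_of_nonneg hA hp.le).trans (le_max_left _ _)
  · exact (mul_le_mul_of_nonneg_left h hA.le).trans (le_max_right _ _)

lemma coord {n : ℕ} (c wv S : Fin n → ℝ) (β : ℝ) (hβ : 0 < β)
    (G : Finset ℝ) (hG : G.Nonempty) (hw : ∀ i, wv i ∈ G) (t₀ : ℝ) :
    ∃ t ∈ G, (∑ i, c i * Real.exp (-β * (|wv i - t₀| + S i)))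
      ≤ max 0 (∑ i, c i * Real.exp (-β * (|wv i - t| + S i))) := by
  set F : ℝ → ℝ := fun t => ∑ i, c i * Real.exp (-β * (|wv i - t| + S i)) with hFdef
  by_cases ht₀ : t₀ ∈ G
  · exact ⟨t₀, ht₀, le_max_right _ _⟩
  have hne : ∀ i, wv i ≠ t₀ := fun i h => ht₀ (h ▸ hw i)
  by_cases hR : (G.filter (fun g => t₀ < g)).Nonempty
  · by_cases hL : (G.filter (fun g => g < t₀)).Nonempty
    · set u := (G.filter (fun g => g < t₀)).max' hL with hudef
      set v := (G.filter (fun g => t₀ < g)).min' hR with hvdef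
      have hum := (G.filter (fun g => g < t₀)).max'_mem hL
      have hvm := (G.filter (fun g => t₀ < g)).min'_mem hR
      have huG : u ∈ G := (Finset.mem_filter.1 hum).1
      have hut : u < t₀ := (Finset.mem_filter.1 hum).2
      have hvG : v ∈ G := (Finset.mem_filter.1 hvm).1
      have htv : t₀ < v := (Finset.mem_filter.1 hvm).2
      have hsplit : ∀ i, (t₀ < wv i ∧ v ≤ wv i) ∨ (¬ t₀ < wv i ∧ wv i ≤ u) := by
        intro i
        rcases lt_or_gt_of_ne (hne i) with h | h
        · exact Or.inr ⟨not_lt.2 h.le, Finset.le_max' (G.filter (fun g => g < t₀))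
            (wv i) (Finset.mem_filter.2 ⟨hw i, h⟩)⟩
        · exact Or.inl ⟨h, Finset.min'_le (G.filter (fun g => t₀ < g)) (wv i)
            (Finset.mem_filter.2 ⟨hw i, h⟩)⟩
      set A := ∑ i ∈ Finset.univ.filter (fun i => t₀ < wv i),
        c i * Real.exp (-β * (wv i + S i)) with hA
      set B := ∑ i ∈ Finset.univ.filter (fun i => ¬ t₀ < wv i),
        c i * Real.exp (-β * (S i - wv i)) with hB
      have hrep : ∀ t, u ≤ t → t ≤ v →
          F t = A * Real.exp (β * t) + B * (Real.exp (β * t))⁻¹ := by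
        intro t h1 h2
        have hFt : F t = ∑ i : Fin n, c i * Real.exp (-β * (|wv i - t| + S i)) := rfl
        rw [hFt, ← Real.exp_neg, hA, hB, Finset.sum_mul, Finset.sum_mul,
          ← Finset.sum_filter_add_sum_filter_not Finset.univ (fun i => t₀ < wv i)]
        congr 1
        · refine Finset.sum_congr rfl fun i hi => ?_
          have hiv : v ≤ wv i :=
            ((hsplit i).resolve_right (fun h => h.1 (Finset.mem_filter.1 hi).2)).2
          rw [abs_of_nonneg (by linarith : (0:ℝ) ≤ wv i - t), mul_assoc, ← Real.exp_add]
          congr 2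
          ring
        · refine Finset.sum_congr rfl fun i hi => ?_
          have hiu : wv i ≤ u :=
            ((hsplit i).resolve_left (fun h => (Finset.mem_filter.1 hi).2 h.1)).2
          rw [abs_of_nonpos (by linarith : wv i - t ≤ 0), mul_assoc, ← Real.exp_add]
          congr 2
          ring
      have e1 : Real.exp (β * u) ≤ Real.exp (β * t₀) :=
        Real.exp_le_exp.2 (by nlinarith)
      have e2 : Real.exp (β * t₀) ≤ Real.exp (β * v) :=
        Real.exp_le_exp.2 (by nlinarith)
      have hb := aux1 A B _ _ _ (Real.exp_pos (β * u)) e1 e2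
      rw [← hrep t₀ hut.le htv.le, ← hrep u le_rfl (by linarith),
        ← hrep v (by linarith) le_rfl] at hb
      rcases le_total (F u) (F v) with h | h
      · rw [max_eq_right h] at hb
        exact ⟨v, hvG, hb⟩
      · rw [max_eq_left h] at hb
        exact ⟨u, huG, hb⟩
    · -- all grid points (hence all wv i) are > t₀
      set v := G.min' hG with hvdef
      have hvG : v ∈ G := G.min'_mem hG
      have hall : ∀ g ∈ G, t₀ < g := by
        intro g hg
        rcases lt_or_gt_of_ne (fun h : g = t₀ => ht₀ (h ▸ hg)) with h | h
        · exact absurd ⟨g, Finset.mem_filter.2 ⟨hg, h⟩⟩ hL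
        · exact h
      have htv : t₀ < v := hall v hvG
      set A := ∑ i, c i * Real.exp (-β * (wv i + S i)) with hA
      have hrep : ∀ t, t ≤ v → F t = A * Real.exp (β * t) := by
        intro t h2
        have hFt : F t = ∑ i : Fin n, c i * Real.exp (-β * (|wv i - t| + S i)) := rfl
        rw [hFt, hA, Finset.sum_mul]
        refine Finset.sum_congr rfl fun i _ => ?_
        have hiv : v ≤ wv i := Finset.min'_le _ _ (hw i)
        rw [abs_of_nonneg (by linarith : (0:ℝ) ≤ wv i - t), mul_assoc, ← Real.exp_add]
        congr 2
        ring
      have e2 : Real.exp (β * t₀) ≤ Real.exp (β * v) :=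
        Real.exp_le_exp.2 (by nlinarith)
      have hb := aux3 A _ _ (Real.exp_pos (β * t₀)) e2
      rw [← hrep t₀ htv.le, ← hrep v le_rfl] at hb
      exact ⟨v, hvG, hb⟩
  · -- all grid points (hence all wv i) are < t₀
    set u := G.max' hG with hudef
    have huG : u ∈ G := G.max'_mem hG
    have hall : ∀ g ∈ G, g < t₀ := by
      intro g hg
      rcases lt_or_gt_of_ne (fun h : g = t₀ => ht₀ (h ▸ hg)) with h | h
      · exact h
      · exact absurd ⟨g, Finset.mem_filter.2 ⟨hg, h⟩⟩ hR
    have hut : u < t₀ := hall u huG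
    set B := ∑ i, c i * Real.exp (-β * (S i - wv i)) with hB
    have hrep : ∀ t, u ≤ t → F t = B * (Real.exp (β * t))⁻¹ := by
      intro t h1
      have hFt : F t = ∑ i : Fin n, c i * Real.exp (-β * (|wv i - t| + S i)) := rfl
      rw [hFt, ← Real.exp_neg, hB, Finset.sum_mul]
      refine Finset.sum_congr rfl fun i _ => ?_
      have hiu : wv i ≤ u := Finset.le_max' _ _ (hw i)
      rw [abs_of_nonpos (by linarith : wv i - t ≤ 0), mul_assoc, ← Real.exp_add]
      congr 2
      ring
    have e1 : Real.exp (β * u) ≤ Real.exp (β * t₀) :=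
      Real.exp_le_exp.2 (by nlinarith)
    have hb := aux2 B _ _ (Real.exp_pos (β * u)) e1
    rw [← hrep t₀ hut.le, ← hrep u le_rfl] at hb
    exact ⟨u, huG, hb⟩

lemma keylem {d n : ℕ} (w : Fin n → Fin d → ℝ) (c : Fin n → ℝ) (β : ℝ) (hβ : 0 < β)
    (U : Finset (Fin d)) (C : Fin d → Finset ℝ) (hCne : ∀ j, (C j).Nonempty)
    (hwC : ∀ i j, w i j ∈ C j)
    (T : (Fin d → ℝ) → ℝ)
    (hT : ∀ z, T z = ∑ i, c i * Real.exp (-β * ∑ j ∈ U, |w i j - z j|)) :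
    ∀ z, ∃ z' ∈ Fintype.piFinset C, T z ≤ max 0 (T z') := by
  suffices h : ∀ k, ∀ z : Fin d → ℝ, (U.filter (fun j => z j ∉ C j)).card ≤ k →
      ∃ z' ∈ Fintype.piFinset C, T z ≤ max 0 (T z') by
    intro z
    exact h _ z le_rfl
  intro k
  induction k with
  | zero =>
    intro z hz
    have hfe : U.filter (fun j => z j ∉ C j) = ∅ :=
      Finset.card_eq_zero.1 (Nat.le_zero.1 hz)
    have hmem : ∀ j ∈ U, z j ∈ C j := by
      intro j hj
      by_contra hc
      have : j ∈ U.filter (fun j => z j ∉ C j) := Finset.mem_filter.2 ⟨hj, hc⟩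
      rw [hfe] at this
      exact absurd this (Finset.notMem_empty j)
    refine ⟨fun j => if h : j ∈ U then z j else (hCne j).choose, ?_, ?_⟩
    · rw [Fintype.mem_piFinset]
      intro j
      by_cases hj : j ∈ U
      · simpa [hj] using hmem j hj
      · simpa [hj] using (hCne j).choose_spec
    · have : T (fun j => if h : j ∈ U then z j else (hCne j).choose) = T z := by
        rw [hT, hT]
        refine Finset.sum_congr rfl fun i _ => ?_
        have heq : ∑ j ∈ U, |w i j - (if h : j ∈ U then z j else (hCne j).choose)|
            = ∑ j ∈ U, |w i j - z j| :=
          Finset.sum_congr rfl fun j hj => by rw [dif_pos hj]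
        rw [heq]
      rw [this]
      exact le_max_right _ _
  | succ k ih =>
    intro z hz
    by_cases hcard : (U.filter (fun j => z j ∉ C j)).card ≤ k
    · exact ih z hcard
    · have hne : (U.filter (fun j => z j ∉ C j)).Nonempty := by
        rw [← Finset.card_pos]
        omega
      obtain ⟨j₀, hj₀⟩ := hne
      have hj₀U : j₀ ∈ U := (Finset.mem_filter.1 hj₀).1
      set S : Fin n → ℝ := fun i => ∑ j ∈ U.erase j₀, |w i j - z j| with hS
      have hF : ∀ t, T (Function.update z j₀ t)
          = ∑ i, c i * Real.exp (-β * (|w i j₀ - t| + S i)) := by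
        intro t
        rw [hT]
        refine Finset.sum_congr rfl fun i _ => ?_
        have heq : ∑ j ∈ U, |w i j - Function.update z j₀ t j| = |w i j₀ - t| + S i := by
          rw [← Finset.add_sum_erase U (fun j => |w i j - Function.update z j₀ t j|) hj₀U,
            Function.update_self]
          congr 1
          refine Finset.sum_congr rfl fun j hj => ?_
          rw [Function.update_of_ne (Finset.ne_of_mem_erase hj)]
        rw [heq]
      have hz0 : T z = ∑ i, c i * Real.exp (-β * (|w i j₀ - z j₀| + S i)) := by
        have := hF (z j₀)
        rwa [Function.update_eq_self] at this
      obtain ⟨t, htG, hle⟩ := coord c (fun i => w i j₀) S β hβ (C j₀) (hCne j₀)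
        (fun i => hwC i j₀) (z j₀)
      rw [← hz0, ← hF t] at hle
      have hsub : U.filter (fun j => Function.update z j₀ t j ∉ C j)
          ⊆ (U.filter (fun j => z j ∉ C j)).erase j₀ := by
        intro j hj
        obtain ⟨hjU, hjC⟩ := Finset.mem_filter.1 hj
        have hjne : j ≠ j₀ := by
          intro h
          subst h
          rw [Function.update_self] at hjC
          exact hjC htG
        rw [Function.update_of_ne hjne] at hjC
        exact Finset.mem_erase.2 ⟨hjne, Finset.mem_filter.2 ⟨hjU, hjC⟩⟩
      have hcard2 : (U.filter (fun j => Function.update z j₀ t j ∉ C j)).card ≤ k := by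
        have h1 := Finset.card_le_card hsub
        rw [Finset.card_erase_of_mem hj₀] at h1
        omega
      obtain ⟨z', hz', hle2⟩ := ih (Function.update z j₀ t) hcard2
      exact ⟨z', hz', hle.trans (max_le (le_max_left _ _) hle2)⟩

theorem stmt6 {d l1 l2 : ℕ} (x : Fin l1 → Fin d → ℝ) (y : Fin l2 → Fin d → ℝ)
    (a : Fin l1 → ℝ) (b : Fin l2 → ℝ) (β : ℝ)
    (ha : ∀ i, 0 < a i) (hb : ∀ i, 0 < b i) (hβ : 0 < β)
    (U : Finset (Fin d)) (hU : U.Nonempty)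
    (T : (Fin d → ℝ) → ℝ)
    (hT : ∀ z, T z = ∑ i, a i * Real.exp (-β * ∑ j ∈ U, |x i j - z j|)
      - ∑ i, b i * Real.exp (-β * ∑ j ∈ U, |y i j - z j|))
    (C : Fin d → Finset ℝ)
    (hC : ∀ j, C j = Finset.univ.image (fun i => x i j) ∪ Finset.univ.image (fun i => y i j))
    (X : Finset ℝ) (hX : X = (Fintype.piFinset C).image T)
    (V : Finset ℝ) (hV : V = insert 0 X) (hVne : V.Nonempty) :
    ∀ zstar : Fin d → ℝ, V.min' hVne ≤ T zstar ∧ T zstar ≤ V.max' hVne := by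
  intro zstar
  have h0V : (0:ℝ) ∈ V := by rw [hV]; exact Finset.mem_insert_self 0 X
  by_cases hn : l1 + l2 = 0
  · have hl1 : l1 = 0 := by omega
    have hl2 : l2 = 0 := by omega
    subst hl1; subst hl2
    have hz : T zstar = 0 := by rw [hT]; simp
    rw [hz]
    exact ⟨V.min'_le 0 h0V, V.le_max' 0 h0V⟩
  · have hCne : ∀ j, (C j).Nonempty := by
      intro j
      rw [hC]
      rcases Nat.eq_zero_or_pos l1 with h1 | h1
      · have h2 : 0 < l2 := by omega
        exact ⟨y ⟨0, h2⟩ j, Finset.mem_union_right _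
          (Finset.mem_image.2 ⟨⟨0, h2⟩, Finset.mem_univ _, rfl⟩)⟩
      · exact ⟨x ⟨0, h1⟩ j, Finset.mem_union_left _
          (Finset.mem_image.2 ⟨⟨0, h1⟩, Finset.mem_univ _, rfl⟩)⟩
    have hwC : ∀ (i : Fin (l1 + l2)) (j : Fin d), Fin.append x y i j ∈ C j := by
      intro i j
      rw [hC]
      induction i using Fin.addCases with
      | left i0 =>
        rw [Fin.append_left]
        exact Finset.mem_union_left _ (Finset.mem_image.2 ⟨i0, Finset.mem_univ _, rfl⟩)
      | right i0 =>
        rw [Fin.append_right]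
        exact Finset.mem_union_right _ (Finset.mem_image.2 ⟨i0, Finset.mem_univ _, rfl⟩)
    have hT' : ∀ z, T z = ∑ i : Fin (l1 + l2), Fin.append a (fun i => -(b i)) i
        * Real.exp (-β * ∑ j ∈ U, |Fin.append x y i j - z j|) := by
      intro z
      rw [hT, Fin.sum_univ_add]
      simp only [Fin.append_left, Fin.append_right, neg_mul]
      rw [Finset.sum_neg_distrib]
      ring
    have hT2 : ∀ z, -(T z) = ∑ i : Fin (l1 + l2),
        (-(Fin.append a (fun i => -(b i)) i))
        * Real.exp (-β * ∑ j ∈ U, |Fin.append x y i j - z j|) := by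
      intro z
      rw [hT' z, ← Finset.sum_neg_distrib]
      exact Finset.sum_congr rfl fun i _ => (neg_mul _ _).symm
    obtain ⟨z', hz', hup⟩ := keylem (Fin.append x y) (Fin.append a (fun i => -(b i)))
      β hβ U C hCne hwC T hT' zstar
    obtain ⟨z2, hz2, hlow⟩ := keylem (Fin.append x y)
      (fun i => -(Fin.append a (fun i => -(b i)) i)) β hβ U C hCne hwC
      (fun z => -(T z)) hT2 zstar
    have hTz' : T z' ∈ V := by
      rw [hV]
      exact Finset.mem_insert_of_mem (hX ▸ Finset.mem_image.2 ⟨z', hz', rfl⟩)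
    have hTz2 : T z2 ∈ V := by
      rw [hV]
      exact Finset.mem_insert_of_mem (hX ▸ Finset.mem_image.2 ⟨z2, hz2, rfl⟩)
    constructor
    · rcases le_max_iff.1 hlow with h | h
      · exact (V.min'_le 0 h0V).trans (by linarith)
      · exact (V.min'_le _ hTz2).trans (by linarith)
    · rcases le_max_iff.1 hup with h | h
      · exact h.trans (V.le_max' 0 h0V)
      · exact h.trans (V.le_max' _ hTz')
end

section
/- With the notation of the multivariate bound lemma: for i ∈ {1,...,l2} and j ∈ U let g_i(j) = max over s of |y_i(j) - p_s(j)| where p_s ranges over all points x_1,...,x_{l1}, y_1,...,y_{l2}. Then max X ≤ Σ_{i=1}^{l1} a_i - Σ_{i=1}^{l2} b_i exp(-β Σ_{j∈U} g_i(j)), where X is the finite set of imputed values of T over the grid z(j) ∈ {x_1(j),...,x_{l1}(j), y_1(j),...,y_{l2}(j)} for j ∈ U. -/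
theorem stmt8 {d l1 l2 : ℕ} (hl2 : 0 < l2)
    (x : Fin l1 → Fin d → ℝ) (y : Fin l2 → Fin d → ℝ)
    (a : Fin l1 → ℝ) (b : Fin l2 → ℝ) (β : ℝ)
    (ha : ∀ i, 0 < a i) (hb : ∀ i, 0 < b i) (hβ : 0 < β)
    (U : Finset (Fin d)) (hU : U.Nonempty)
    (T : (Fin d → ℝ) → ℝ)
    (hT : ∀ z, T z = ∑ i, a i * Real.exp (-β * ∑ j ∈ U, |x i j - z j|)
      - ∑ i, b i * Real.exp (-β * ∑ j ∈ U, |y i j - z j|))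
    (C : Fin d → Finset ℝ)
    (hC : ∀ j, C j = Finset.univ.image (fun i => x i j) ∪ Finset.univ.image (fun i => y i j))
    (hCne : ∀ j, (C j).Nonempty)
    (X : Finset ℝ) (hX : X = (Fintype.piFinset C).image T) (hXne : X.Nonempty)
    (g : Fin l2 → Fin d → ℝ)
    (hg : ∀ i j, g i j = (((C j).image (fun v => |y i j - v|)).max'
      ((hCne j).image _))) :
    X.max' hXne ≤ ∑ i, a i - ∑ i, b i * Real.exp (-β * ∑ j ∈ U, g i j) := by
  apply Finset.max'_le
  intro t ht
  rw [hX] at ht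
  obtain ⟨z, hz, rfl⟩ := Finset.mem_image.mp ht
  rw [hT]
  have hzC : ∀ j, z j ∈ C j := fun j => Fintype.mem_piFinset.mp hz j
  have h1 : ∑ i, a i * Real.exp (-β * ∑ j ∈ U, |x i j - z j|) ≤ ∑ i, a i := by
    apply Finset.sum_le_sum
    intro i _
    have hS : 0 ≤ ∑ j ∈ U, |x i j - z j| :=
      Finset.sum_nonneg fun j _ => abs_nonneg _
    have : Real.exp (-β * ∑ j ∈ U, |x i j - z j|) ≤ 1 := by
      rw [Real.exp_le_one_iff]
      nlinarith
    nlinarith [(ha i).le]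
  have h2 : ∑ i, b i * Real.exp (-β * ∑ j ∈ U, g i j)
      ≤ ∑ i, b i * Real.exp (-β * ∑ j ∈ U, |y i j - z j|) := by
    apply Finset.sum_le_sum
    intro i _
    have hgz : ∑ j ∈ U, |y i j - z j| ≤ ∑ j ∈ U, g i j := by
      apply Finset.sum_le_sum
      intro j _
      rw [hg i j]
      exact Finset.le_max' ((C j).image (fun v => |y i j - v|)) _ (Finset.mem_image_of_mem _ (hzC j))
    have : Real.exp (-β * ∑ j ∈ U, g i j)
        ≤ Real.exp (-β * ∑ j ∈ U, |y i j - z j|) := by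
      apply Real.exp_le_exp.mpr
      nlinarith
    nlinarith [(hb i).le]
  linarith
end
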